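/- arXiv:1611.09643 — 2 statements merged into one kernel-verified Lean document; each statement's English description precedes it below -/
import Mathlib

section
/- Let S be a real n×n matrix. Then every real eigenvalue λ of ΣS, for every signature matrix Σ, satisfies |λ| < 1 if and only if for every ĉ ∈ ℝⁿ there exists a unique z ∈ ℝⁿ with z − S|z| = ĉ. (This is the equivalence ρ₀ˢ(S) < 1 ⇔ unique solvability of the absolute value equation for all right-hand sides.) -/
/-!
The forward direction goes through the regularity condition `AbsRegular S`: every matrix `1 - S D`
with `D` diagonal and `|D| ≤ 1` is nonsingular.

If some `1 - S D` is singular, then, `det (1 - S D)` being affine in each diagonal entry of `D`, it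
is `≤ 0` at some signature `D = Σ`; since it is `1` at `D = 0`, the intermediate value theorem
gives `det (1 - t Σ S) = 0` for some `t ∈ (0, 1]`, i.e. the real eigenvalue `1 / t ≥ 1` of `Σ S`.

Regularity makes `z ↦ z - S φ(z)` injective whenever `φ` acts on the coordinates by `1`-Lipschitz
maps. Surjectivity for `φ = |·|` follows from the linear case by replacing the coordinates by `|·|`
one at a time: if the equations with `t` and with `-t` in coordinate `j` have solutions `p` and
`m`, then either one of them has the right sign in coordinate `j`, or `p j < 0 < m j` and both
solve the equation with `-|t|` in coordinate `j`, contradicting injectivity.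

Conversely, if `Σ S x = λ x` with `|λ| ≥ 1` and `x ≠ 0`, then `|x| ≤ |S x|` coordinatewise, so one
can write `S x = a - b` and `x = |a| - |b|`; then `a ≠ b` solve `z - S |z| = c` for the same `c`.
-/

def IsSignature {n : ℕ} (M : Matrix (Fin n) (Fin n) ℝ) : Prop :=
  ∃ σ : Fin n → ℝ, (∀ i, σ i = 1 ∨ σ i = -1) ∧ M = Matrix.diagonal σ

def IsRealEigenvalue {n : ℕ} (A : Matrix (Fin n) (Fin n) ℝ) (lam : ℝ) : Prop :=
  ∃ v : Fin n → ℝ, v ≠ 0 ∧ A.mulVec v = lam • v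

open Function Matrix

theorem lipschitzWith_update {α β ι : Type*} [PseudoEMetricSpace α] [PseudoEMetricSpace β]
    [DecidableEq ι] {K : NNReal} {φ : ι → α → β} (hφ : ∀ i, LipschitzWith K (φ i))
    {f : α → β} (hf : LipschitzWith K f) (j i : ι) : LipschitzWith K (update φ j f i) := by
  rcases eq_or_ne i j with rfl | hij
  · simpa using hf
  · simpa [hij] using hφ i

theorem exists_abs_le_one_mul_eq {u ψ : ℝ} (h : |ψ| ≤ |u|) : ∃ d : ℝ, |d| ≤ 1 ∧ ψ = d * u := by
  rcases eq_or_ne u 0 with rfl | hu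
  · exact ⟨0, by simp, by simpa using h⟩
  · refine ⟨ψ / u, ?_, (div_mul_cancel₀ ψ hu).symm⟩
    rwa [abs_div, div_le_one (abs_pos.mpr hu)]

theorem exists_sub_eq_abs_sub_abs_eq {u v : ℝ} (h : |v| ≤ |u|) :
    ∃ a b : ℝ, a - b = u ∧ |a| - |b| = v := by
  obtain ⟨h₁, h₂⟩ := abs_le.mp h
  rcases le_or_gt 0 u with hu | hu
  · rw [abs_of_nonneg hu] at h₁ h₂
    exact ⟨(u + v) / 2, (v - u) / 2, by ring, by
      rw [abs_of_nonneg (by linarith), abs_of_nonpos (by linarith)]; ring⟩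
  · rw [abs_of_neg hu] at h₁ h₂
    exact ⟨(u - v) / 2, -((u + v) / 2), by ring, by
      rw [abs_of_nonpos (by linarith), abs_of_nonneg (by linarith)]; ring⟩

theorem exists_sign_mul_le (β : ℝ) {x : ℝ} (hx : |x| ≤ 1) :
    ∃ t : ℝ, (t = 1 ∨ t = -1) ∧ β * t ≤ β * x := by
  obtain ⟨h₁, h₂⟩ := abs_le.mp hx
  rcases le_or_gt 0 β with hβ | hβ
  · exact ⟨-1, Or.inr rfl, by nlinarith⟩
  · exact ⟨1, Or.inl rfl, by nlinarith⟩

variable {ι : Type*} [Fintype ι]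

theorem exists_sign_vector_le_of_affine_update [DecidableEq ι] {f : (ι → ℝ) → ℝ}
    (hf : ∀ d j, ∃ α β : ℝ, ∀ t, f (update d j t) = α + β * t)
    {d : ι → ℝ} (hd : ∀ i, |d i| ≤ 1) :
    ∃ σ : ι → ℝ, (∀ i, σ i = 1 ∨ σ i = -1) ∧ f σ ≤ f d := by
  suffices ∀ T : Finset ι, ∃ σ : ι → ℝ,
      (∀ i, |σ i| ≤ 1) ∧ (∀ i ∈ T, σ i = 1 ∨ σ i = -1) ∧ f σ ≤ f d by
    obtain ⟨σ, -, hσ, hle⟩ := this Finset.univ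
    exact ⟨σ, fun i => hσ i (Finset.mem_univ i), hle⟩
  intro T
  induction T using Finset.induction_on with
  | empty => exact ⟨d, hd, by simp, le_rfl⟩
  | insert j T hj ih =>
    obtain ⟨σ, hσ, hσT, hle⟩ := ih
    obtain ⟨α, β, hαβ⟩ := hf σ j
    obtain ⟨t, ht, hβ⟩ := exists_sign_mul_le β (hσ j)
    refine ⟨update σ j t, fun i => ?_, fun i hi => ?_, ?_⟩
    · rcases eq_or_ne i j with rfl | hij
      · rcases ht with rfl | rfl <;> simp
      · simpa [hij] using hσ i
    · rcases eq_or_ne i j with rfl | hij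
      · simpa using ht
      · simpa [hij] using hσT i ((Finset.mem_insert.mp hi).resolve_left hij)
    · calc f (update σ j t) = α + β * t := hαβ t
        _ ≤ α + β * σ j := by linarith
        _ = f σ := by rw [← hαβ, update_eq_self]
        _ ≤ f d := hle

def aveMap (S : Matrix ι ι ℝ) (φ : ι → ℝ → ℝ) (z : ι → ℝ) : ι → ℝ :=
  z - S *ᵥ fun i => φ i (z i)

-- Nonsingularity of every `1 - S * diagonal d` with `|d i| ≤ 1`, stated through kernels.
def AbsRegular (S : Matrix ι ι ℝ) : Prop :=
  ∀ u ψ : ι → ℝ, (∀ i, |ψ i| ≤ |u i|) → u = S *ᵥ ψ → u = 0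

theorem one_sub_mul_diagonal_mulVec [DecidableEq ι] (S : Matrix ι ι ℝ) (d u : ι → ℝ) :
    (1 - S * diagonal d) *ᵥ u = aveMap S (fun i t => d i * t) u := by
  rw [sub_mulVec, one_mulVec, ← mulVec_mulVec, aveMap]
  congr 2
  funext i
  exact mulVec_diagonal d u i

theorem det_one_sub_mul_diagonal_update_affine [DecidableEq ι] (S : Matrix ι ι ℝ)
    (d : ι → ℝ) (j : ι) :
    ∃ α β : ℝ, ∀ t, (1 - S * diagonal (update d j t)).det = α + β * t := by
  set M := 1 - S * diagonal (update d j 0)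
  refine ⟨M.det, (M.updateCol j fun i => -S i j).det, fun t => ?_⟩
  have hM : 1 - S * diagonal (update d j t) =
      M.updateCol j ((fun i => M i j) + t • fun i => -S i j) := by
    ext i k
    rcases eq_or_ne k j with rfl | hk
    · simp [M, one_apply]
      ring
    · simp [M, hk, one_apply]
  rw [hM, det_updateCol_add, det_updateCol_smul, updateCol_eq_self]
  ring

theorem exists_eigenvalue_one_le_of_det_one_sub_nonpos [DecidableEq ι] {A : Matrix ι ι ℝ}
    (h : (1 - A).det ≤ 0) : ∃ μ : ℝ, 1 ≤ μ ∧ ∃ x ≠ 0, A *ᵥ x = μ • x := by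
  have hcont : Continuous fun t : ℝ => (1 - t • A).det := by fun_prop
  obtain ⟨t, ⟨ht₀, ht₁⟩, hdet⟩ : ∃ t ∈ Set.Icc (0 : ℝ) 1, (1 - t • A).det = 0 :=
    intermediate_value_Icc' zero_le_one hcont.continuousOn ⟨by simpa using h, by simp⟩
  have ht : 0 < t := ht₀.lt_of_ne (by rintro rfl; simp at hdet)
  obtain ⟨x, hx, hAx⟩ := exists_mulVec_eq_zero_iff.mpr hdet
  rw [sub_mulVec, one_mulVec, smul_mulVec, sub_eq_zero] at hAx
  refine ⟨t⁻¹, one_le_inv₀ ht |>.mpr ht₁, x, hx, ?_⟩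
  conv_rhs => rw [hAx]
  rw [smul_smul, inv_mul_cancel₀ ht.ne', one_smul]

theorem absRegular_of_forall_eigenvalue_abs_lt_one [DecidableEq ι] {S : Matrix ι ι ℝ}
    (H : ∀ σ : ι → ℝ, (∀ i, σ i = 1 ∨ σ i = -1) → ∀ (μ : ℝ) (x : ι → ℝ), x ≠ 0 →
      (diagonal σ * S) *ᵥ x = μ • x → |μ| < 1) :
    AbsRegular S := by
  intro u ψ hψ hu
  by_contra hu₀
  choose d hd hψd using fun i => exists_abs_le_one_mul_eq (hψ i)
  have hdet : (1 - S * diagonal d).det = 0 := by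
    refine exists_mulVec_eq_zero_iff.mp ⟨u, hu₀, ?_⟩
    rw [one_sub_mul_diagonal_mulVec, aveMap, ← funext hψd, ← hu, sub_self]
  obtain ⟨σ, hσ, hle⟩ := exists_sign_vector_le_of_affine_update
    (f := fun d => (1 - S * diagonal d).det) (det_one_sub_mul_diagonal_update_affine S) hd
  rw [hdet, det_one_sub_mul_comm] at hle
  obtain ⟨μ, hμ, x, hx, hAx⟩ := exists_eigenvalue_one_le_of_det_one_sub_nonpos hle
  have := H σ hσ μ x hx hAx
  rw [abs_of_nonneg (by linarith)] at this
  linarith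

theorem AbsRegular.injective_aveMap {S : Matrix ι ι ℝ} (hS : AbsRegular S) {φ : ι → ℝ → ℝ}
    (hφ : ∀ i, LipschitzWith 1 (φ i)) : Injective (aveMap S φ) := by
  intro z w h
  rw [← sub_eq_zero]
  refine hS _ ((fun i => φ i (z i)) - fun i => φ i (w i)) (fun i => ?_) ?_
  · simpa [Real.dist_eq] using (hφ i).dist_le_mul (z i) (w i)
  · rw [mulVec_sub]
    unfold aveMap at h
    linear_combination h

theorem aveMap_update_congr [DecidableEq ι] (S : Matrix ι ι ℝ) (φ : ι → ℝ → ℝ) {j : ι}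
    {f g : ℝ → ℝ} {z : ι → ℝ} (h : f (z j) = g (z j)) :
    aveMap S (update φ j f) z = aveMap S (update φ j g) z := by
  unfold aveMap
  congr 2
  funext i
  rcases eq_or_ne i j with rfl | hij
  · simpa using h
  · simp [hij]

theorem AbsRegular.surjective_aveMap_update_abs [DecidableEq ι] {S : Matrix ι ι ℝ}
    (hS : AbsRegular S) {φ : ι → ℝ → ℝ} (hφ : ∀ i, LipschitzWith 1 (φ i)) (j : ι)
    (hid : Surjective (aveMap S (update φ j id)))
    (hneg : Surjective (aveMap S (update φ j Neg.neg))) :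
    Surjective (aveMap S (update φ j abs)) := by
  intro c
  obtain ⟨p, rfl⟩ := hid c
  obtain ⟨m, hm⟩ := hneg (aveMap S (update φ j id) p)
  by_cases hp : 0 ≤ p j
  · exact ⟨p, aveMap_update_congr S φ (abs_of_nonneg hp)⟩
  by_cases hm₀ : m j ≤ 0
  · exact ⟨m, (aveMap_update_congr S φ (abs_of_nonpos hm₀)).trans hm⟩
  -- Now `p j < 0 < m j`, so `p` and `m` both solve the equation with `-|t|` in coordinate `j`.
  have hinj := hS.injective_aveMap <| lipschitzWith_update hφ
    (show LipschitzWith 1 fun t : ℝ => -|t| from lipschitzWith_one_norm.neg) j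
  have hpm : p = m := hinj <| calc
    aveMap S (update φ j fun t => -|t|) p = aveMap S (update φ j id) p :=
      aveMap_update_congr S φ (by simp [abs_of_neg (not_le.mp hp)])
    _ = aveMap S (update φ j Neg.neg) m := hm.symm
    _ = aveMap S (update φ j fun t => -|t|) m :=
      aveMap_update_congr S φ (by simp [abs_of_pos (not_le.mp hm₀)])
  exact absurd (hpm ▸ not_le.mp hm₀ : 0 < p j).le hp

theorem AbsRegular.surjective_aveMap [DecidableEq ι] {S : Matrix ι ι ℝ} (hS : AbsRegular S)
    (J : Finset ι) : ∀ φ : ι → ℝ → ℝ, (∀ i, LipschitzWith 1 (φ i)) → (∀ i ∈ J, φ i = abs) →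
      (∀ i ∉ J, ∃ e, φ i = (e * ·)) → Surjective (aveMap S φ) := by
  induction J using Finset.induction_on with
  | empty =>
    intro φ hφ _ hlin
    choose e he using fun i => hlin i (Finset.notMem_empty i)
    have hφ_eq : aveMap S φ = (1 - S * diagonal e).mulVec := by
      funext z
      rw [one_sub_mul_diagonal_mulVec, ← funext he]
    rw [hφ_eq, mulVec_surjective_iff_isUnit, ← mulVec_injective_iff_isUnit, ← hφ_eq]
    exact hS.injective_aveMap hφ
  | insert j J hj ih =>
    intro φ hφ habs hlin
    have hsurj (f : ℝ → ℝ) (hf : LipschitzWith 1 f) (hf_lin : ∃ e, f = (e * ·)) :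
        Surjective (aveMap S (update φ j f)) := by
      refine ih _ (lipschitzWith_update hφ hf j) (fun i hi => ?_) (fun i hi => ?_)
      · rw [update_of_ne (ne_of_mem_of_not_mem hi hj)]
        exact habs i (Finset.mem_insert_of_mem hi)
      · rcases eq_or_ne i j with rfl | hij
        · simpa using hf_lin
        · rw [update_of_ne hij]
          exact hlin i (by simp [hij, hi])
    rw [← update_eq_self j φ, habs j (Finset.mem_insert_self j J)]
    exact hS.surjective_aveMap_update_abs hφ j (hsurj id LipschitzWith.id ⟨1, by ext; simp⟩)
      (hsurj Neg.neg LipschitzWith.id.neg ⟨-1, by ext; simp⟩)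

theorem AbsRegular.bijective_aveMap_abs [DecidableEq ι] {S : Matrix ι ι ℝ} (hS : AbsRegular S) :
    Bijective (aveMap S fun _ => abs) :=
  ⟨hS.injective_aveMap fun _ => lipschitzWith_one_norm,
    hS.surjective_aveMap Finset.univ _ (fun _ => lipschitzWith_one_norm) (fun _ _ => rfl)
      (fun i hi => absurd (Finset.mem_univ i) hi)⟩

theorem not_injective_aveMap_abs_of_eigenvalue [DecidableEq ι] {S : Matrix ι ι ℝ} {σ : ι → ℝ}
    (hσ : ∀ i, |σ i| ≤ 1) {μ : ℝ} (hμ : 1 ≤ |μ|) {x : ι → ℝ} (hx : x ≠ 0)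
    (h : (diagonal σ * S) *ᵥ x = μ • x) : ¬ Injective (aveMap S fun _ => abs) := by
  have hle (i : ι) : |x i| ≤ |(S *ᵥ x) i| := by
    have hi := congrFun h i
    rw [← mulVec_mulVec, mulVec_diagonal, Pi.smul_apply, smul_eq_mul] at hi
    calc |x i| ≤ |μ| * |x i| := le_mul_of_one_le_left (abs_nonneg _) hμ
      _ = |σ i| * |(S *ᵥ x) i| := by rw [← abs_mul, ← abs_mul, hi]
      _ ≤ |(S *ᵥ x) i| := mul_le_of_le_one_left (abs_nonneg _) (hσ i)
  choose a b hab habs using fun i => exists_sub_eq_abs_sub_abs_eq (hle i)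
  have hx_eq : x = (fun i => |a i|) - fun i => |b i| := funext fun i => (habs i).symm
  intro hinj
  have hab_eq : a = b := hinj <| by
    have hSx : a - b = S *ᵥ x := funext hab
    rw [hx_eq, mulVec_sub] at hSx
    unfold aveMap
    linear_combination hSx
  exact hx (by rw [hx_eq, hab_eq, sub_self])

theorem stmt_5 {n : ℕ} (S : Matrix (Fin n) (Fin n) ℝ) :
    (∀ E, IsSignature E → ∀ lam : ℝ, IsRealEigenvalue (E * S) lam → |lam| < 1) ↔
      (∀ c : Fin n → ℝ, ∃! z : Fin n → ℝ, z - S.mulVec (fun i => |z i|) = c) := by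
  refine Iff.trans ?_ (bijective_iff_existsUnique (aveMap S fun _ => abs))
  constructor
  · intro H
    exact (absRegular_of_forall_eigenvalue_abs_lt_one fun σ hσ μ x hx h =>
      H _ ⟨σ, hσ, rfl⟩ μ ⟨x, hx, h⟩).bijective_aveMap_abs
  · rintro hS E ⟨σ, hσ, rfl⟩ μ ⟨x, hx, h⟩
    by_contra! hμ
    have hσ_abs (i : Fin n) : |σ i| ≤ 1 := by rcases hσ i with hs | hs <;> simp [hs]
    exact not_injective_aveMap_abs_of_eigenvalue hσ_abs hμ hx h hS.1
end

section
/- Let S be a real n×n matrix with ‖S‖∞ < 1/2, and let z, ĉ ∈ ℝⁿ satisfy z − S|z| = ĉ. Then for every index i with |ĉ_i| = max_k |ĉ_k|, it holds that sign(z_i) = sign(ĉ_i). -/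
/-!
In the sup norm, `z = c + S|z|` gives `‖z‖ ≤ ‖c‖ + ‖z‖/2`, so `‖z‖ ≤ 2 |c_i|` when `|c_i|` is
maximal. Hence the perturbation `(S|z|)_i` has size at most `2 (∑_j |S_ij|) |c_i|`, strictly
less than `|c_i|` unless `c_i = 0` (and then it vanishes), so it cannot change the sign of `c_i`.
-/

open Matrix

lemma Real.sign_add_eq_sign_of_abs_le_mul {a b t : ℝ} (ht : t < 1) (h : |b| ≤ t * |a|) :
    Real.sign (a + b) = Real.sign a := by
  rcases lt_trichotomy a 0 with ha | rfl | ha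
  · have : |b| < -a := by nlinarith [abs_of_neg ha]
    rw [Real.sign_of_neg ha, Real.sign_of_neg (by linarith [le_abs_self b])]
  · have hb : b = 0 := abs_nonpos_iff.mp (by simpa using h)
    simp [hb]
  · have : |b| < a := by nlinarith [abs_of_pos ha]
    rw [Real.sign_of_pos ha, Real.sign_of_pos (by linarith [neg_abs_le b])]

lemma abs_mulVec_apply_le {m n : Type*} [Fintype n] (S : Matrix m n ℝ) (v : n → ℝ) (k : m) :
    |(S *ᵥ v) k| ≤ (∑ j, |S k j|) * ‖v‖ := by
  calc |(S *ᵥ v) k| ≤ ∑ j, |S k j * v j| := Finset.abs_sum_le_sum_abs _ _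
    _ ≤ ∑ j, |S k j| * ‖v‖ := Finset.sum_le_sum fun j _ => by
        rw [abs_mul]; exact mul_le_mul_of_nonneg_left (norm_le_pi_norm v j) (abs_nonneg _)
    _ = (∑ j, |S k j|) * ‖v‖ := (Finset.sum_mul ..).symm

lemma norm_abs_apply {n : Type*} [Fintype n] (z : n → ℝ) : ‖fun i => |z i|‖ = ‖z‖ := by
  simp [Pi.norm_def]

lemma one_sub_mul_norm_le_of_sub_mulVec_abs_eq {n : Type*} [Fintype n] {S : Matrix n n ℝ}
    {r : ℝ} (hr : 0 ≤ r) (hS : ∀ k, ∑ j, |S k j| ≤ r) {z c : n → ℝ}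
    (h : z - S *ᵥ (fun i => |z i|) = c) :
    (1 - r) * ‖z‖ ≤ ‖c‖ := by
  suffices ‖z‖ ≤ ‖c‖ + r * ‖z‖ by linarith
  refine (pi_norm_le_iff_of_nonneg (by positivity)).2 fun k => ?_
  have hk : z k = c k + (S *ᵥ fun i => |z i|) k := by rw [← h]; simp
  calc ‖z k‖ ≤ |c k| + |(S *ᵥ fun i => |z i|) k| := by rw [hk]; exact abs_add_le _ _
    _ ≤ ‖c‖ + r * ‖z‖ := by
      gcongr
      · exact norm_le_pi_norm c k
      · calc _ ≤ (∑ j, |S k j|) * ‖fun i => |z i|‖ := abs_mulVec_apply_le S _ k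
          _ ≤ r * ‖z‖ := by rw [norm_abs_apply]; gcongr; exact hS k

theorem stmt_11 {n : ℕ} (S : Matrix (Fin n) (Fin n) ℝ)
    (hS : ∀ i, ∑ j, |S i j| < 1 / 2) (z c : Fin n → ℝ)
    (h : z - S.mulVec (fun i => |z i|) = c) :
    ∀ i, (∀ k, |c k| ≤ |c i|) → Real.sign (z i) = Real.sign (c i) := by
  intro i hi
  have hc : ‖c‖ = |c i| :=
    le_antisymm ((pi_norm_le_iff_of_nonneg (abs_nonneg _)).2 hi) (norm_le_pi_norm c i)
  have hz : ‖z‖ ≤ 2 * |c i| := by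
    have := one_sub_mul_norm_le_of_sub_mulVec_abs_eq (by norm_num) (fun k => (hS k).le) h
    linarith
  have hzi : z i = c i + (S *ᵥ fun k => |z k|) i := by rw [← h]; simp
  rw [hzi]
  refine Real.sign_add_eq_sign_of_abs_le_mul (t := 2 * ∑ j, |S i j|) (by linarith [hS i]) ?_
  calc _ ≤ (∑ j, |S i j|) * ‖fun k => |z k|‖ := abs_mulVec_apply_le S _ i
    _ ≤ (∑ j, |S i j|) * (2 * |c i|) := by
      rw [norm_abs_apply]; gcongr
    _ = _ := by ring
end
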